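/- For every constant β > 0 there exists a network instance (namely Example 1 with M sufficiently large) in which the cumulative loss of the greedy evader over T = 2 epochs exceeds β times the cumulative loss of an optimal strategic evasion solution; i.e., the greedy policy cannot approximate the optimal evasion solution within any constant factor. -/
import Mathlib


open Finset

/-- Arc costs of the Example 1 network (nodes 1..5, source 1, sink 4). -/
noncomputable def ex1cost (M : ℝ) : ℕ × ℕ → ℝ := fun a =>
  if a = (1, 2) then 1 else if a = (2, 3) then 1 else if a = (3, 4) then 1
  else if a = (1, 3) then 3 else if a = (2, 4) then 3
  else if a = (1, 4) then M else if a = (1, 5) then M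
  else 0

noncomputable def ex1l (M : ℝ) (P : Finset (ℕ × ℕ)) : ℝ := ∑ a ∈ P, ex1cost M a

def ex1Paths : Set (Finset (ℕ × ℕ)) :=
  { {(1,2), (2,3), (3,4)}, {(1,2), (2,4)}, {(1,3), (3,4)}, {(1,4)}, {(1,5), (5,4)} }

/-- The evader's second-epoch loss when the interdictor blocks `I`. -/
noncomputable def ex1m (M : ℝ) (I : Finset (ℕ × ℕ)) : ℝ :=
  sInf (ex1l M '' {P | P ∈ ex1Paths ∧ Disjoint P I})

lemma lA (M : ℝ) : ex1l M {(1,2), (2,3), (3,4)} = 3 := by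
  simp [ex1l, ex1cost, Finset.sum_insert, Finset.mem_insert, Finset.mem_singleton]
  norm_num

lemma lB (M : ℝ) : ex1l M {(1,3), (3,4)} = 4 := by
  simp [ex1l, ex1cost, Finset.sum_insert, Finset.mem_insert, Finset.mem_singleton]
  norm_num

lemma lC (M : ℝ) : ex1l M {(1,2), (2,4)} = 4 := by
  simp [ex1l, ex1cost, Finset.sum_insert, Finset.mem_insert, Finset.mem_singleton]
  norm_num

lemma lD (M : ℝ) : ex1l M {(1,4)} = M := by
  simp [ex1l, ex1cost]

lemma lE (M : ℝ) : ex1l M ({(1,5), (5,4)} : Finset (ℕ × ℕ)) = M := by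
  simp [ex1l, ex1cost, Finset.sum_insert, Finset.mem_insert, Finset.mem_singleton]

lemma key (M : ℝ) : ex1m M {(1,2), (3,4)} = M := by
  have himg : ex1l M '' {P | P ∈ ex1Paths ∧ Disjoint P {(1,2), (3,4)}} = {M} := by
    ext x
    constructor
    · rintro ⟨P, ⟨hP, hd⟩, rfl⟩
      rcases hP with h | h | h | h | h <;> subst h
      · exact absurd hd (by simp [Finset.disjoint_left])
      · exact absurd hd (by simp [Finset.disjoint_left])
      · exact absurd hd (by simp [Finset.disjoint_left])
      · simp [lD]
      · simp [lE]
    · rintro rfl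
      exact ⟨{(1,4)}, ⟨Or.inr (Or.inr (Or.inr (Or.inl rfl))), by decide⟩, lD _⟩
  rw [ex1m, himg, csInf_singleton]

/-- for every constant `β > 0` there is a network instance
(Example 1 with `M` large enough) in which the greedy evader's cumulative loss
over `T = 2` epochs — `ℓ({1→2→3→4})` plus the second-epoch loss under the
semi-oracle's blocking set — exceeds `β` times the cumulative loss of a
(hence of the optimal) strategic evasion solution `(P1, P2)`, `P2` being
feasible against any blocking set contained in `P1`. -/
theorem stmt12 (β : ℝ) (hβ : 0 < β) :
    ∃ M : ℝ, 5 < M ∧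
      ∃ P1 ∈ ex1Paths, ∃ P2 ∈ ex1Paths,
        (∀ I : Finset (ℕ × ℕ), I ⊆ P1 → Disjoint P2 I) ∧
        ∀ I : Finset (ℕ × ℕ), I ⊆ {(1,2), (2,3), (3,4)} → I.card ≤ 2 →
          (∀ I' : Finset (ℕ × ℕ), I' ⊆ {(1,2), (2,3), (3,4)} → I'.card ≤ 2 →
            ex1m M I' ≤ ex1m M I) →
          β * (ex1l M P1 + ex1l M P2) <
            ex1l M {(1,2), (2,3), (3,4)} + ex1m M I := by
  refine ⟨8 * β + 6, by linarith, {(1,3), (3,4)}, by simp [ex1Paths],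
    {(1,2), (2,4)}, by simp [ex1Paths], ?_, ?_⟩
  · intro I hI
    have hd : Disjoint ({(1,2), (2,4)} : Finset (ℕ × ℕ)) {(1,3), (3,4)} := by decide
    exact hd.mono_right hI
  · intro I hI hcard hopt
    have h1 := hopt {(1,2), (3,4)} (by decide) (by decide)
    rw [key] at h1
    rw [lA, lB, lC]
    linarith
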